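/- Let (𝓕_n)_{n≥0} be an interval filtration on a d-dimensional rectangle I that is r-regular with parameter γ, where r = (r_1,…,r_d) is a tuple of positive integers. If m = (m_1,…,m_d) satisfies m_i ≥ r_i for every i ∈ {1,…,d}, then (𝓕_n) is m-regular with a parameter γ′ depending only on r, m and γ. -/
import Mathlib


open MeasureTheory Set

structure IntervalPartition where
  a : ℝ
  b : ℝ
  m : ℕ
  m_pos : 0 < m
  t : Fin (m + 1) → ℝ
  t_mono : StrictMono t
  t_first : t 0 = a
  t_last : t (Fin.last m) = b

namespace IntervalPartition

/-- The `i`-th breakpoint of the partition (extended to all of `ℕ`). -/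
def pt (P : IntervalPartition) (i : ℕ) : ℝ :=
  P.t ⟨min i P.m, Nat.lt_succ_of_le (min_le_right _ _)⟩

/-- The underlying interval `[a, b)`. -/
def interval (P : IntervalPartition) : Set ℝ := Set.Ico P.a P.b

/-- The `i`-th atom of the partition, `[t_i, t_{i+1})`. -/
def atomN (P : IntervalPartition) (i : ℕ) : Set ℝ := Set.Ico (P.pt i) (P.pt (i + 1))

/-- The length of the `i`-th atom. -/
def atomLen (P : IntervalPartition) (i : ℕ) : ℝ := P.pt (i + 1) - P.pt i

/-- Membership in the spline space `S_k(𝓕)`:  `(k-2)`-times continuously differentiable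
on the interval and a polynomial of degree at most `k - 1` on each atom. -/
def IsSpline (k : ℕ) (P : IntervalPartition) (f : ℝ → ℝ) : Prop :=
  (2 ≤ k → ContDiffOn ℝ (k - 2 : ℕ) f P.interval) ∧
  ∀ i < P.m, ∃ p : Polynomial ℝ, p.natDegree ≤ k - 1 ∧ ∀ x ∈ P.atomN i, f x = p.eval x

/-- `P.Refines Q` : `Q` is finer than `P` (same interval, more breakpoints). -/
def Refines (P Q : IntervalPartition) : Prop :=
  P.a = Q.a ∧ P.b = Q.b ∧ Set.range P.t ⊆ Set.range Q.t

/-- The pair `(i, j)` describes a B-spline support of order `r`: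
the union of the consecutive atoms `i, …, j`, where either `j - i + 1 = r`, or
`j - i + 1 < r` and the union touches an endpoint of the interval. -/
def IsBSupportIdx (P : IntervalPartition) (r i j : ℕ) : Prop :=
  i ≤ j ∧ j < P.m ∧ (j + 1 - i = r ∨ (j + 1 - i < r ∧ (i = 0 ∨ j = P.m - 1)))

/-- The B-spline support as a set. -/
def bSupportSet (P : IntervalPartition) (i j : ℕ) : Set ℝ := Set.Ico (P.pt i) (P.pt (j + 1))

/-- The length of a B-spline support. -/
def bSupportLen (P : IntervalPartition) (i j : ℕ) : ℝ := P.pt (j + 1) - P.pt i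

/-- `k`-regularity with parameter `γ` of a single interval σ-algebra: any two B-spline
supports of order `k` at Euclidean distance zero have comparable lengths. -/
def KRegular (P : IntervalPartition) (k : ℕ) (γ : ℝ) : Prop :=
  ∀ i j i' j' : ℕ, P.IsBSupportIdx k i j → P.IsBSupportIdx k i' j' →
    P.pt i' ≤ P.pt (j + 1) → P.pt i ≤ P.pt (j' + 1) →
    P.bSupportLen i j ≤ γ * P.bSupportLen i' j'

-- The index of the atom containing `x` (junk value if there is none).
open Classical in
noncomputable def idx (P : IntervalPartition) (x : ℝ) : ℕ :=
  if h : ∃ i, i < P.m ∧ x ∈ P.atomN i then h.choose else 0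

end IntervalPartition

/-- The `d`-dimensional rectangle underlying a product of interval σ-algebras. -/
def rect {d : ℕ} (P : Fin d → IntervalPartition) : Set (Fin d → ℝ) :=
  Set.univ.pi fun δ => (P δ).interval

/-- The atom of the product σ-algebra with index vector `i`. -/
def prodAtomN {d : ℕ} (P : Fin d → IntervalPartition) (i : Fin d → ℕ) : Set (Fin d → ℝ) :=
  Set.univ.pi fun δ => (P δ).atomN (i δ)

/-- `|d(A,B)|₁` for atoms with index vectors `i`, `j`. -/
def dist1 {d : ℕ} (i j : Fin d → ℕ) : ℕ := ∑ δ, ((i δ : ℤ) - (j δ : ℤ)).natAbs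

/-- The volume of `conv(A, B)`, the smallest axis-parallel rectangle containing the
atoms with index vectors `i` and `j`. -/
def convVol {d : ℕ} (P : Fin d → IntervalPartition) (i j : Fin d → ℕ) : ℝ :=
  ∏ δ, ((P δ).pt (max (i δ) (j δ) + 1) - (P δ).pt (min (i δ) (j δ)))

/-- The kernel sum `Σ_A q^{|d(A, A_ix)|₁} / |conv(A, A_ix)| ∫_A |f|`. -/
noncomputable def kern {d : ℕ} (P : Fin d → IntervalPartition) (q : ℝ)
    (f : (Fin d → ℝ) → ℝ) (ix : Fin d → ℕ) : ℝ :=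
  ∑ ia : (∀ δ, Fin ((P δ).m)),
    q ^ dist1 (fun δ => (ia δ : ℕ)) ix / convVol P (fun δ => (ia δ : ℕ)) ix *
      ∫ y in prodAtomN P (fun δ => (ia δ : ℕ)), |f y|

/-- Coordinatewise `k`-regularity with parameter `γ` of a multivariate filtration. -/
def KRegularAll (d : ℕ) (F : ℕ → Fin d → IntervalPartition) (k : Fin d → ℕ) (γ : ℝ) : Prop :=
  ∀ n δ, (F n δ).KRegular (k δ) γ

/-- Direction `r`-regularity with parameter `β`: there is no direction `δ`, no
monotone sequence of times `n 0 ≤ n 1 ≤ …`, no strictly decreasing chain of atoms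
`prodAtomN (F (n 0)) (ix 0) ⊋ … ⊋ prodAtomN (F (n (β-1))) (ix (β-1))` and no B-spline
support `B` of order `r δ` in the `δ`-th coordinate of `F (n 0)` containing the `δ`-th
component of the first atom such that `B` is still a B-spline support of order `r δ`
in the `δ`-th coordinate of `F (n (β-1))`. -/
def DirRegular (d : ℕ) (F : ℕ → Fin d → IntervalPartition) (r : Fin d → ℕ) (β : ℕ) : Prop :=
  ¬ ∃ (δ : Fin d) (n : ℕ → ℕ) (ix : ℕ → Fin d → ℕ) (i j : ℕ),
      (∀ l l', l ≤ l' → n l ≤ n l') ∧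
      (∀ l, l < β → ∀ δ', ix l δ' < (F (n l) δ').m) ∧
      (∀ l l', l < l' → l' < β →
        prodAtomN (F (n l')) (ix l') ⊂ prodAtomN (F (n l)) (ix l)) ∧
      (F (n 0) δ).IsBSupportIdx (r δ) i j ∧
      (F (n 0) δ).atomN (ix 0 δ) ⊆ (F (n 0) δ).bSupportSet i j ∧
      ∃ i' j', (F (n (β - 1)) δ).IsBSupportIdx (r δ) i' j' ∧
        (F (n (β - 1)) δ).bSupportSet i' j' = (F (n 0) δ).bSupportSet i j

/-- The tensor product spline space: the linear span of products of coordinate splines. -/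
def TensorSplineSpan (d : ℕ) (k : Fin d → ℕ) (P : Fin d → IntervalPartition) :
    Submodule ℝ ((Fin d → ℝ) → ℝ) :=
  Submodule.span ℝ {G : (Fin d → ℝ) → ℝ |
    ∃ g : Fin d → ℝ → ℝ, (∀ δ, IntervalPartition.IsSpline (k δ) (P δ) (g δ)) ∧
      G = fun x => ∏ δ, g δ (x δ)}

/-- `g` is the orthogonal projection (in `L²` of the rectangle) of `f` onto the
tensor product spline space. -/
def IsProj (d : ℕ) (k : Fin d → ℕ) (P : Fin d → IntervalPartition)
    (f g : (Fin d → ℝ) → ℝ) : Prop :=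
  g ∈ TensorSplineSpan d k P ∧ ∀ h ∈ TensorSplineSpan d k P,
    ∫ x in rect P, g x * h x = ∫ x in rect P, f x * h x

/-- A multivariate interval filtration in standard form: it starts from the trivial
σ-algebra and at each step exactly one atom of exactly one coordinate σ-algebra is
split into two. -/
def StandardForm (d : ℕ) (F : ℕ → Fin d → IntervalPartition) : Prop :=
  (∀ δ, (F 0 δ).m = 1) ∧
  ∀ n, ∃ δ₀, (∀ δ, δ ≠ δ₀ → F (n + 1) δ = F n δ) ∧
    (F n δ₀).Refines (F (n + 1) δ₀) ∧ (F (n + 1) δ₀).m = (F n δ₀).m + 1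


namespace IntervalPartition

lemma pt_mono (P : IntervalPartition) : Monotone P.pt := by
  intro i j h
  exact P.t_mono.monotone (by simp only [Fin.mk_le_mk]; omega)

lemma pt_lt_pt (P : IntervalPartition) {i j : ℕ} (h : i < j) (hj : j ≤ P.m) :
    P.pt i < P.pt j := by
  apply P.t_mono
  simp only [Fin.mk_lt_mk]
  omega

lemma le_of_pt_le (P : IntervalPartition) {i j : ℕ} (hi : i ≤ P.m)
    (h : P.pt i ≤ P.pt j) : i ≤ j := by
  by_contra h'
  exact absurd h (not_le.2 (P.pt_lt_pt (by omega) hi))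

lemma one_le_of_kregular {P : IntervalPartition} {k : ℕ} {γ : ℝ}
    (hk : 1 ≤ k) (h : P.KRegular k γ) : 1 ≤ γ := by
  have hm := P.m_pos
  set j := min k P.m - 1 with hj
  have hsupp : P.IsBSupportIdx k 0 j := by
    refine ⟨by omega, by omega, ?_⟩
    rcases le_or_gt k P.m with h' | h'
    · left; omega
    · right; exact ⟨by omega, Or.inl rfl⟩
  have hL : 0 < P.bSupportLen 0 j :=
    sub_pos.2 (P.pt_lt_pt (by omega) (by omega))
  have := h 0 j 0 j hsupp hsupp (P.pt_mono (by omega)) (P.pt_mono (by omega))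
  nlinarith

lemma kregular_weaken {P : IntervalPartition} {k : ℕ} {γ γ' : ℝ}
    (h : P.KRegular k γ) (hγ : γ ≤ γ') : P.KRegular k γ' := by
  intro i j i' j' hA hB h1 h2
  obtain ⟨hb1, hb2, -⟩ := id hB
  have hL : 0 ≤ P.bSupportLen i' j' := sub_nonneg.2 (P.pt_mono (by omega))
  have := h i j i' j' hA hB h1 h2
  nlinarith

lemma kregular_mono {P : IntervalPartition} {r m : ℕ} {γ : ℝ}
    (hr : 1 ≤ r) (hrm : r ≤ m) (hγ : 1 ≤ γ) (hK : P.KRegular r γ) :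
    P.KRegular m ((m : ℝ) * γ ^ (3 * m + 1)) := by
  have hγ0 : (0:ℝ) ≤ γ := le_trans zero_le_one hγ
  have hm1 : 1 ≤ m := le_trans hr hrm
  intro i j i' j' hA hB hT1 hT2
  obtain ⟨hij, hjM, hAalt⟩ := hA
  obtain ⟨hij', hjM', hBalt⟩ := hB
  have hBlen0 : 0 ≤ P.bSupportLen i' j' := sub_nonneg.2 (P.pt_mono (by omega))
  have hij1 : i' ≤ j + 1 := P.le_of_pt_le (by omega) hT1
  have hij2 : i ≤ j' + 1 := P.le_of_pt_le (by omega) hT2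
  have hc : j + 1 - i ≤ m := by omega
  have hc' : j' + 1 - i' ≤ m := by omega
  have hpow1 : (1:ℝ) ≤ γ ^ (3 * m + 1) := one_le_pow₀ hγ
  by_cases hMr : P.m < r
  · -- both supports are r-supports; apply regularity directly
    have hAr : P.IsBSupportIdx r i j :=
      ⟨hij, hjM, Or.inr ⟨by omega, by omega⟩⟩
    have hBr : P.IsBSupportIdx r i' j' :=
      ⟨hij', hjM', Or.inr ⟨by omega, by omega⟩⟩
    have h1 := hK i j i' j' hAr hBr hT1 hT2
    have h2 : γ ≤ (m:ℝ) * γ ^ (3 * m + 1) := by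
      have : γ ≤ γ ^ (3 * m + 1) := le_self_pow₀ hγ (by omega)
      have hm' : (1:ℝ) ≤ (m:ℝ) := by exact_mod_cast hm1
      nlinarith
    nlinarith
  · push_neg at hMr
    set M := P.m with hMdef
    -- blocks of exactly r atoms
    set len : ℕ → ℝ := fun s => P.pt (s + r) - P.pt s with hlen
    have hlen0 : ∀ s, 0 ≤ len s := fun s => sub_nonneg.2 (P.pt_mono (by omega))
    have hblock : ∀ s, s + r ≤ M → P.IsBSupportIdx r s (s + r - 1) := by
      intro s hs
      exact ⟨by omega, by omega, Or.inl (by omega)⟩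
    have hblen : ∀ s, P.bSupportLen s (s + r - 1) = len s := by
      intro s
      have e : s + r - 1 + 1 = s + r := by omega
      simp only [bSupportLen, e, hlen]
    have hadj : ∀ s, s + 1 + r ≤ M → len s ≤ γ * len (s+1) ∧ len (s+1) ≤ γ * len s := by
      intro s hs
      have e1 : s + r - 1 + 1 = s + r := by omega
      have e2 : s + 1 + r - 1 + 1 = s + 1 + r := by omega
      constructor
      · have := hK s (s+r-1) (s+1) (s+1+r-1) (hblock s (by omega)) (hblock (s+1) hs)
          (by rw [e1]; exact P.pt_mono (by omega)) (by rw [e2]; exact P.pt_mono (by omega))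
        rwa [hblen, hblen] at this
      · have := hK (s+1) (s+1+r-1) s (s+r-1) (hblock (s+1) hs) (hblock s (by omega))
          (by rw [e2]; exact P.pt_mono (by omega)) (by rw [e1]; exact P.pt_mono (by omega))
        rwa [hblen, hblen] at this
    have hchain : ∀ k s, s + k + r ≤ M →
        len s ≤ γ^k * len (s+k) ∧ len (s+k) ≤ γ^k * len s := by
      intro k
      induction k with
      | zero => intro s _; simp
      | succ k ih =>
        intro s hs
        obtain ⟨h1, h2⟩ := hadj s (by omega)
        obtain ⟨h3, h4⟩ := ih (s+1) (by omega)
        have e : s + 1 + k = s + (k + 1) := by omega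
        rw [e] at h3 h4
        have hp : (0:ℝ) ≤ γ^k := pow_nonneg hγ0 _
        constructor
        · calc len s ≤ γ * len (s+1) := h1
            _ ≤ γ * (γ^k * len (s+(k+1))) := by nlinarith [hlen0 (s+(k+1))]
            _ = γ^(k+1) * len (s+(k+1)) := by ring
        · calc len (s+(k+1)) ≤ γ^k * len (s+1) := h4
            _ ≤ γ^k * (γ * len s) := by nlinarith [hlen0 s]
            _ = γ^(k+1) * len s := by ring
    have hchain2 : ∀ a b K, a + r ≤ M → b + r ≤ M → a ≤ b + K → b ≤ a + K →
        len a ≤ γ^K * len b := by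
      intro a b K ha hb hab hba
      rcases le_total a b with h | h
      · have h1 := (hchain (b - a) a (by omega)).1
        have e : a + (b - a) = b := by omega
        rw [e] at h1
        exact h1.trans (mul_le_mul_of_nonneg_right
          (pow_le_pow_right₀ hγ (show b - a ≤ K by omega)) (hlen0 b))
      · have h1 := (hchain (a - b) b (by omega)).2
        have e : b + (a - b) = a := by omega
        rw [e] at h1
        exact h1.trans (mul_le_mul_of_nonneg_right
          (pow_le_pow_right₀ hγ (show a - b ≤ K by omega)) (hlen0 b))
    set sB := min i' (M - r) with hsB
    have hstar : len sB ≤ γ * P.bSupportLen i' j' := by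
      rcases le_or_gt (j' + 1) (i' + r) with hsm | hbig
      · -- B itself is an r-support
        have hBr : P.IsBSupportIdx r i' j' := by
          refine ⟨hij', hjM', ?_⟩
          rcases Nat.lt_or_ge (j' + 1 - i') r with h' | h'
          · right
            refine ⟨h', ?_⟩
            rcases hBalt with h'' | h''
            · omega
            · exact h''.2
          · left; omega
        have e : sB + r - 1 + 1 = sB + r := by omega
        have := hK sB (sB + r - 1) i' j' (hblock sB (by omega)) hBr
          (by rw [e]; exact P.pt_mono (by omega)) (P.pt_mono (by omega))
        rwa [hblen] at this
      · -- first r atoms of B form a block inside B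
        have e : sB = i' := by omega
        rw [e]
        have h1 : len i' ≤ P.bSupportLen i' j' :=
          sub_le_sub_right (P.pt_mono (by omega)) _
        nlinarith
    have hatom : ∀ s, i ≤ s → s ≤ j →
        P.pt (s+1) - P.pt s ≤ γ^(3*m) * (γ * P.bSupportLen i' j') := by
      intro s hs1 hs2
      set ts := min s (M - r) with hts
      have h1 : P.pt (s+1) - P.pt s ≤ len ts :=
        sub_le_sub (P.pt_mono (by omega)) (P.pt_mono (by omega))
      have h2 : len ts ≤ γ^(3*m) * len sB :=
        hchain2 ts sB (3*m) (by omega) (by omega) (by omega) (by omega)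
      have h3 : γ^(3*m) * len sB ≤ γ^(3*m) * (γ * P.bSupportLen i' j') :=
        mul_le_mul_of_nonneg_left hstar (pow_nonneg hγ0 _)
      linarith
    -- telescoping sum over the atoms of A
    have htel : P.bSupportLen i j = ∑ k ∈ Finset.range (j + 1 - i),
        (P.pt (i + k + 1) - P.pt (i + k)) := by
      have := Finset.sum_range_sub (f := fun k => P.pt (i + k)) (j + 1 - i)
      have e : i + (j + 1 - i) = j + 1 := by omega
      rw [e] at this
      exact this.symm
    rw [htel]
    have hbnd0 : (0:ℝ) ≤ γ^(3*m) * (γ * P.bSupportLen i' j') :=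
      mul_nonneg (pow_nonneg hγ0 _) (mul_nonneg hγ0 hBlen0)
    calc ∑ k ∈ Finset.range (j + 1 - i), (P.pt (i + k + 1) - P.pt (i + k))
        ≤ ∑ _k ∈ Finset.range (j + 1 - i), γ^(3*m) * (γ * P.bSupportLen i' j') :=
          Finset.sum_le_sum (fun k hk => hatom (i + k) (by omega)
            (by simp only [Finset.mem_range] at hk; omega))
      _ = (j + 1 - i : ℕ) * (γ^(3*m) * (γ * P.bSupportLen i' j')) := by
          rw [Finset.sum_const, nsmul_eq_mul, Finset.card_range]
      _ ≤ (m:ℝ) * (γ^(3*m) * (γ * P.bSupportLen i' j')) :=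
          mul_le_mul_of_nonneg_right (by exact_mod_cast hc) hbnd0
      _ = (m:ℝ) * γ^(3*m+1) * P.bSupportLen i' j' := by rw [pow_succ]; ring

end IntervalPartition

/-- **Monotonicity of regularity in the order.** If a filtration on a `d`-dimensional
rectangle is `r`-regular with parameter `γ` and `m_i ≥ r_i` for all directions `i`, then
it is `m`-regular with a parameter `γ'` depending only on `r`, `m` and `γ`. -/
theorem regularity_monotone_in_order (d : ℕ) (hd : 1 ≤ d) (r m : Fin d → ℕ)
    (hr : ∀ δ, 1 ≤ r δ) (hm : ∀ δ, r δ ≤ m δ) (γ : ℝ) :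
    ∃ γ' : ℝ, ∀ F : ℕ → Fin d → IntervalPartition,
      (∀ n δ, (F n δ).Refines (F (n + 1) δ)) →
      KRegularAll d F r γ → KRegularAll d F m γ' := by
  classical
  set S := Finset.univ.sup m with hS
  refine ⟨(S : ℝ) * (max γ 1) ^ (3 * S + 1), ?_⟩
  intro F _hRef hKr n δ
  have hγ1 : 1 ≤ γ := IntervalPartition.one_le_of_kregular (hr δ) (hKr n δ)
  have hmS : m δ ≤ S := Finset.le_sup (Finset.mem_univ δ)
  rw [max_eq_left hγ1]
  apply IntervalPartition.kregular_weaken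
    (IntervalPartition.kregular_mono (hr δ) (hm δ) hγ1 (hKr n δ))
  have h1 : ((m δ : ℕ) : ℝ) ≤ (S : ℝ) := by exact_mod_cast hmS
  have h2 : γ ^ (3 * m δ + 1) ≤ γ ^ (3 * S + 1) :=
    pow_le_pow_right₀ hγ1 (by omega)
  have h3 : (0:ℝ) ≤ γ ^ (3 * m δ + 1) := pow_nonneg (by linarith) _
  have h4 : (0:ℝ) ≤ (S:ℝ) := Nat.cast_nonneg _
  exact mul_le_mul h1 h2 h3 h4
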